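/- For all n ≥ 5, all k ≥ 1 and all ℓ ≥ 0, the counts p_{n,k,ℓ} satisfy the recurrence p_{n,k,ℓ} = p_{n−1,k,ℓ} + p_{n−4,k−1,ℓ} + p_{n−3,ℓ,k−1}. -/
import Mathlib


/-- `F n` is the Fibonacci number in the convention `F 1 = 1, F 2 = 2`,
`F (n+1) = F n + F (n-1)`, i.e. `F n = fib (n+1)`. -/
def F (n : ℕ) : ℕ := Nat.fib (n + 1)

/-- A far-difference representation of an integer `N`: disjoint finite sets
`P, M` of positive indices with `N = ∑_{i∈P} F i − ∑_{j∈M} F j`, where any two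
distinct indices of the same sign differ by at least `4` and any two indices of
opposite signs differ by at least `3`. -/
def IsFarDiff (N : ℤ) (P M : Finset ℕ) : Prop :=
  (∀ i ∈ P, 1 ≤ i) ∧ (∀ j ∈ M, 1 ≤ j) ∧ Disjoint P M ∧
  (∀ i ∈ P, ∀ j ∈ P, i ≠ j → 4 ≤ |(i : ℤ) - (j : ℤ)|) ∧
  (∀ i ∈ M, ∀ j ∈ M, i ≠ j → 4 ≤ |(i : ℤ) - (j : ℤ)|) ∧
  (∀ i ∈ P, ∀ j ∈ M, 3 ≤ |(i : ℤ) - (j : ℤ)|) ∧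
  (∑ i ∈ P, (F i : ℤ)) - (∑ j ∈ M, (F j : ℤ)) = N

/-- `S n = F n + F (n-4) + F (n-8) + ⋯` (the sum of `F (n - 4i)` over `i ≥ 0`
with `n - 4i > 0`) for `n > 0`, and `S n = 0` for `n ≤ 0`. -/
def S (n : ℕ) : ℕ := ∑ i ∈ Finset.range ((n + 3) / 4), F (n - 4 * i)

/-- `p n k ℓ` is the number of integers `N ∈ (S (n-1), S n]` whose
far-difference representation has exactly `k` positive summands and exactly
`ℓ` negative summands. -/
noncomputable def p (n k ℓ : ℕ) : ℕ :=
  {N : ℤ | (S (n - 1) : ℤ) < N ∧ N ≤ (S n : ℤ) ∧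
    ∃ P M : Finset ℕ, IsFarDiff N P M ∧ P.card = k ∧ M.card = ℓ}.ncard


lemma F_add_two (a : ℕ) : F (a + 2) = F (a + 1) + F a := by
  simp [F, Nat.fib_add_two]
  ring

lemma S_zero : S 0 = 0 := by simp [S]

lemma S_rec (n : ℕ) (h : 1 ≤ n) : S n = F n + S (n - 4) := by
  unfold S
  have h1 : (n + 3) / 4 = (n - 1) / 4 + 1 := by omega
  rw [h1, Finset.sum_range_succ']
  simp only [Nat.mul_zero, Nat.sub_zero]
  rw [add_comm]
  congr 1
  have h2 : (n - 4 + 3) / 4 = (n - 1) / 4 := by omega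
  rw [h2]
  apply Finset.sum_congr rfl
  intro i _
  congr 1
  omega

lemma S_le_succ (n : ℕ) : S n ≤ S (n + 1) := by
  induction n using Nat.strong_induction_on with
  | _ n ih =>
    rcases Nat.eq_zero_or_pos n with rfl | hn
    · simp [S_zero]
    · rw [S_rec n hn, S_rec (n + 1) (by omega)]
      have hF : F n ≤ F (n + 1) := Nat.fib_le_fib_succ
      have hS : S (n - 4) ≤ S (n + 1 - 4) := by
        rcases Nat.lt_or_ge n 4 with h | h
        · have e : n - 4 = 0 := by omega
          rw [e, S_zero]; exact Nat.zero_le _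
        · have h4 : n + 1 - 4 = (n - 4) + 1 := by omega
          rw [h4]; exact ih (n - 4) (by omega)
      omega

lemma S_mono : Monotone S := monotone_nat_of_le_succ S_le_succ

lemma F_eq (n : ℕ) : F (n + 1) = S n + S (n - 2) + 1 := by
  induction n using Nat.strong_induction_on with
  | _ n ih =>
    rcases Nat.lt_or_ge n 4 with h | h
    · interval_cases n <;> decide
    · have e1 : F (n + 1) = F n + F (n - 1) := by
        have := F_add_two (n - 1)
        rw [show n - 1 + 2 = n + 1 by omega, show n - 1 + 1 = n by omega] at this
        omega
      have e2 : F (n - 1) = F (n - 2) + F (n - 3) := by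
        have := F_add_two (n - 3)
        rw [show n - 3 + 2 = n - 1 by omega, show n - 3 + 1 = n - 2 by omega] at this
        omega
      have ih4 := ih (n - 4) (by omega)
      rw [show n - 4 + 1 = n - 3 by omega, show n - 4 - 2 = n - 6 by omega] at ih4
      have s1 : S n = F n + S (n - 4) := S_rec n (by omega)
      have s2 : S (n - 2) = F (n - 2) + S (n - 6) := by
        have := S_rec (n - 2) (by omega)
        rw [show n - 2 - 4 = n - 6 by omega] at this
        exact this
      omega

lemma sum_F_le (m : ℕ) : ∀ (Q : Finset ℕ), (∀ i ∈ Q, 1 ≤ i) → (∀ i ∈ Q, i ≤ m) →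
    (∀ i ∈ Q, ∀ j ∈ Q, i ≠ j → 4 ≤ |(i : ℤ) - (j : ℤ)|) → ∑ i ∈ Q, F i ≤ S m := by
  induction m using Nat.strong_induction_on with
  | _ m ih =>
    intro Q h1 hb hgap
    rcases Q.eq_empty_or_nonempty with rfl | hne
    · simp
    · have haQ : Q.max' hne ∈ Q := Q.max'_mem hne
      set a := Q.max' hne with ha
      have ham : a ≤ m := hb a haQ
      have ha1 : 1 ≤ a := h1 a haQ
      have hsplit : ∑ i ∈ Q, F i = F a + ∑ i ∈ Q.erase a, F i :=
        (Finset.add_sum_erase _ _ haQ).symm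
      have herb : ∀ i ∈ Q.erase a, i ≤ a - 4 := by
        intro i hi
        have hiQ := Finset.mem_of_mem_erase hi
        have hne' := Finset.ne_of_mem_erase hi
        have hile : i ≤ a := Finset.le_max' _ i hiQ
        have := le_abs.mp (hgap i hiQ a haQ hne')
        omega
      have hsum : ∑ i ∈ Q.erase a, F i ≤ S (a - 4) := by
        apply ih (a - 4) (by omega)
        · intro i hi; exact h1 i (Finset.mem_of_mem_erase hi)
        · exact herb
        · intro i hi j hj hij
          exact hgap i (Finset.mem_of_mem_erase hi) j (Finset.mem_of_mem_erase hj) hij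
      have hSa : S a = F a + S (a - 4) := S_rec a ha1
      have hSam : S a ≤ S m := S_mono ham
      omega


lemma IsFarDiff.swap {N : ℤ} {P M : Finset ℕ} (h : IsFarDiff N P M) :
    IsFarDiff (-N) M P := by
  obtain ⟨h1, h2, h3, h4, h5, h6, h7⟩ := h
  exact ⟨h2, h1, h3.symm, h5, h4,
    fun i hi j hj => by rw [abs_sub_comm]; exact h6 j hj i hi, by omega⟩

lemma rep_le {N : ℤ} {P M : Finset ℕ} {n : ℕ} (h : IsFarDiff N P M)
    (hP : ∀ i ∈ P, i ≤ n) : N ≤ (S n : ℤ) := by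
  obtain ⟨h1, h2, h3, h4, h5, h6, h7⟩ := h
  have hs : ∑ i ∈ P, F i ≤ S n := sum_F_le n P h1 hP h4
  have h7' : ((∑ i ∈ P, F i : ℕ) : ℤ) - ((∑ j ∈ M, F j : ℕ) : ℤ) = N := by
    push_cast; exact h7
  omega

lemma rep_bounds {N : ℤ} {P M : Finset ℕ} {n : ℕ} (h : IsFarDiff N P M)
    (hn : n ∈ P) (hP : ∀ i ∈ P, i ≤ n) (hM : ∀ j ∈ M, j + 3 ≤ n) :
    (S (n - 1) : ℤ) < N ∧ N ≤ (S n : ℤ) := by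
  obtain ⟨h1, h2, h3, h4, h5, h6, h7⟩ := h
  have hn1 : 1 ≤ n := h1 n hn
  have hsplit : ∑ i ∈ P, F i = F n + ∑ i ∈ P.erase n, F i :=
    (Finset.add_sum_erase _ _ hn).symm
  have herase : ∑ i ∈ P.erase n, F i ≤ S (n - 4) := by
    apply sum_F_le
    · intro i hi; exact h1 i (Finset.mem_of_mem_erase hi)
    · intro i hi
      have hgap := le_abs.mp
        (h4 i (Finset.mem_of_mem_erase hi) n hn (Finset.ne_of_mem_erase hi))
      have hile := hP i (Finset.mem_of_mem_erase hi)
      omega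
    · intro i hi j hj hij
      exact h4 i (Finset.mem_of_mem_erase hi) j (Finset.mem_of_mem_erase hj) hij
  have hMle : ∑ j ∈ M, F j ≤ S (n - 3) := by
    apply sum_F_le
    · exact h2
    · intro j hj; have := hM j hj; omega
    · exact h5
  have hkey : F n = S (n - 1) + S (n - 3) + 1 := by
    have := F_eq (n - 1)
    rw [show n - 1 + 1 = n by omega, show n - 1 - 2 = n - 3 by omega] at this
    exact this
  have hSn : S n = F n + S (n - 4) := S_rec n hn1
  have h7' : ((∑ i ∈ P, F i : ℕ) : ℤ) - ((∑ j ∈ M, F j : ℕ) : ℤ) = N := by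
    push_cast; exact h7
  omega

lemma rep_classify {N : ℤ} {P M : Finset ℕ} {a : ℕ} (h : IsFarDiff N P M)
    (ha : 1 ≤ a) (hlo : (S (a - 1) : ℤ) < N) (hhi : N ≤ (S a : ℤ)) :
    a ∈ P ∧ (∀ i ∈ P, i ≤ a) ∧ (∀ j ∈ M, j + 3 ≤ a) := by
  have hNpos : 0 < N := lt_of_le_of_lt (Int.natCast_nonneg _) hlo
  have hne : (P ∪ M).Nonempty := by
    rcases Finset.eq_empty_or_nonempty (P ∪ M) with he | hne
    · exfalso
      obtain ⟨hP, hM⟩ := Finset.union_eq_empty.mp he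
      have h7 := h.2.2.2.2.2.2
      rw [hP, hM] at h7
      simp at h7
      omega
    · exact hne
  have htm : (P ∪ M).max' hne ∈ P ∪ M := Finset.max'_mem _ _
  set t := (P ∪ M).max' hne with htdef
  have hle : ∀ i ∈ P ∪ M, i ≤ t := fun i hi => Finset.le_max' _ i hi
  rcases Finset.mem_union.mp htm with htP | htM
  · have hMb : ∀ j ∈ M, j + 3 ≤ t := by
      intro j hj
      have hjle := hle j (Finset.mem_union_right _ hj)
      have := le_abs.mp (h.2.2.2.2.2.1 t htP j hj)
      omega
    have hPb : ∀ i ∈ P, i ≤ t := fun i hi => hle i (Finset.mem_union_left _ hi)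
    obtain ⟨hb1, hb2⟩ := rep_bounds h htP hPb hMb
    have hta : t = a := by
      by_contra hne'
      rcases Nat.lt_or_ge t a with hlt | hge
      · have : S t ≤ S (a - 1) := S_mono (by omega)
        omega
      · have hgt : a < t := by omega
        have : S a ≤ S (t - 1) := S_mono (by omega)
        omega
    subst hta
    exact ⟨htP, hPb, hMb⟩
  · exfalso
    have hPb : ∀ j ∈ P, j + 3 ≤ t := by
      intro j hj
      have hjle := hle j (Finset.mem_union_left _ hj)
      have := le_abs.mp (h.2.2.2.2.2.1 j hj t htM)
      omega
    have hMb : ∀ i ∈ M, i ≤ t := fun i hi => hle i (Finset.mem_union_right _ hi)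
    obtain ⟨hb1, hb2⟩ := rep_bounds h.swap htM hMb hPb
    have : (0 : ℤ) ≤ (S (t - 1) : ℤ) := Int.natCast_nonneg _
    omega

lemma rep_erase {N : ℤ} {P M : Finset ℕ} {n : ℕ} (h : IsFarDiff N P M)
    (hn : n ∈ P) : IsFarDiff (N - F n) (P.erase n) M := by
  obtain ⟨h1, h2, h3, h4, h5, h6, h7⟩ := h
  refine ⟨fun i hi => h1 i (Finset.mem_of_mem_erase hi), h2,
    Finset.disjoint_of_subset_left (Finset.erase_subset _ _) h3,
    fun i hi j hj hij =>
      h4 i (Finset.mem_of_mem_erase hi) j (Finset.mem_of_mem_erase hj) hij,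
    h5, fun i hi j hj => h6 i (Finset.mem_of_mem_erase hi) j hj, ?_⟩
  rw [← Finset.add_sum_erase _ (fun i => (F i : ℤ)) hn] at h7
  linarith

lemma rep_insert {N : ℤ} {P M : Finset ℕ} {n : ℕ} (h : IsFarDiff N P M)
    (hP : ∀ i ∈ P, i + 4 ≤ n) (hM : ∀ j ∈ M, j + 3 ≤ n) (hn1 : 1 ≤ n) :
    IsFarDiff (N + F n) (insert n P) M := by
  obtain ⟨h1, h2, h3, h4, h5, h6, h7⟩ := h
  have hnP : n ∉ P := fun hc => by have := hP n hc; omega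
  refine ⟨?_, h2, ?_, ?_, h5, ?_, ?_⟩
  · intro i hi
    rcases Finset.mem_insert.mp hi with rfl | hi'
    · exact hn1
    · exact h1 i hi'
  · rw [Finset.disjoint_left]
    intro a ha haM
    rcases Finset.mem_insert.mp ha with rfl | ha'
    · have := hM a haM; omega
    · exact (Finset.disjoint_left.mp h3 ha') haM
  · intro i hi j hj hij
    rcases Finset.mem_insert.mp hi with rfl | hi' <;>
      rcases Finset.mem_insert.mp hj with rfl | hj'
    · omega
    · have := hP j hj'
      refine le_abs.mpr (Or.inl ?_)
      omega
    · have := hP i hi'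
      refine le_abs.mpr (Or.inr ?_)
      omega
    · exact h4 i hi' j hj' hij
  · intro i hi j hj
    rcases Finset.mem_insert.mp hi with rfl | hi'
    · have := hM j hj
      refine le_abs.mpr (Or.inl ?_)
      omega
    · exact h6 i hi' j hj
  · rw [Finset.sum_insert hnP]
    linarith

def T (a b c : ℕ) : Set ℤ :=
  {N : ℤ | (S (a - 1) : ℤ) < N ∧ N ≤ (S a : ℤ) ∧
    ∃ P M : Finset ℕ, IsFarDiff N P M ∧ P.card = b ∧ M.card = c}

lemma p_eq_T (a b c : ℕ) : p a b c = (T a b c).ncard := rfl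

lemma T_finite (a b c : ℕ) : (T a b c).Finite := by
  apply (Set.finite_Icc ((S (a - 1) : ℤ) + 1) (S a)).subset
  rintro x ⟨h1, h2, -⟩
  simp only [Set.mem_Icc]
  omega

lemma main_eq (m k ℓ : ℕ) (hk : 1 ≤ k) :
    T (m + 5) k ℓ =
      ((fun y => y + (F (m + 3) : ℤ)) '' T (m + 4) k ℓ) ∪
      ((fun y => y + (F (m + 5) : ℤ)) '' T (m + 1) (k - 1) ℓ) ∪
      ((fun y => (F (m + 5) : ℤ) - y) '' T (m + 2) ℓ (k - 1)) := by
  have c34 : (F (m + 5) : ℤ) = F (m + 4) + F (m + 3) := by exact_mod_cast F_add_two (m + 3)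
  apply Set.Subset.antisymm
  · rintro x ⟨hx1, hx2, P, M, hrep, hcP, hcM⟩
    obtain ⟨htop, hPle, hMle⟩ := rep_classify hrep (by omega) hx1 hx2
    have hrep' : IsFarDiff (x - F (m + 5)) (P.erase (m + 5)) M := rep_erase hrep htop
    have hbP1 : ∀ i ∈ P.erase (m + 5), i ≤ m + 1 := by
      intro i hi
      have hiP := Finset.mem_of_mem_erase hi
      have := le_abs.mp (hrep.2.2.2.1 i hiP (m + 5) htop (Finset.ne_of_mem_erase hi))
      have := hPle i hiP
      omega
    have hbM2 : ∀ j ∈ M, j ≤ m + 2 := by intro j hj; have := hMle j hj; omega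
    have hcP' : (P.erase (m + 5)).card = k - 1 := by
      rw [Finset.card_erase_of_mem htop, hcP]
    rcases lt_or_ge (S m : ℤ) (x - F (m + 5)) with hcase1 | hrest
    · -- middle image: x - F(m+5) ∈ T (m+1) (k-1) ℓ
      refine Or.inl (Or.inr ⟨x - F (m + 5), ⟨hcase1, rep_le hrep' hbP1,
        P.erase (m + 5), M, hrep', hcP', hcM⟩, by ring⟩)
    rcases lt_or_ge (x - F (m + 5)) (-(S (m + 1) : ℤ)) with hcase2 | hcase3
    · -- right image
      have hswap := hrep'.swap
      rw [neg_sub] at hswap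
      refine Or.inr ⟨(F (m + 5) : ℤ) - x, ⟨by show (S (m + 1) : ℤ) < (F (m + 5) : ℤ) - x; omega, rep_le hswap hbM2,
        M, P.erase (m + 5), hswap, hcM, hcP'⟩, by ring⟩
    · -- left image
      have hb : (∀ i ∈ P.erase (m + 5), i ≤ m) ∧ (∀ j ∈ M, j ≤ m + 1) := by
        rcases Finset.eq_empty_or_nonempty (P.erase (m + 5) ∪ M) with he | hne
        · obtain ⟨he1, he2⟩ := Finset.union_eq_empty.mp he
          rw [he1, he2]
          simp
        · have htm := Finset.max'_mem _ hne
          set t := (P.erase (m + 5) ∪ M).max' hne with htdef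
          have hle : ∀ i ∈ P.erase (m + 5) ∪ M, i ≤ t :=
            fun i hi => Finset.le_max' _ i hi
          rcases Finset.mem_union.mp htm with htP' | htM'
          · have hMb : ∀ j ∈ M, j + 3 ≤ t := by
              intro j hj
              have := le_abs.mp (hrep'.2.2.2.2.2.1 t htP' j hj)
              have := hle j (Finset.mem_union_right _ hj)
              omega
            obtain ⟨hb1, -⟩ := rep_bounds hrep' htP'
              (fun i hi => hle i (Finset.mem_union_left _ hi)) hMb
            have htle : t ≤ m := by
              by_contra hc
              have : S m ≤ S (t - 1) := S_mono (by omega)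
              omega
            constructor
            · intro i hi; have := hle i (Finset.mem_union_left _ hi); omega
            · intro j hj; have := hle j (Finset.mem_union_right _ hj); omega
          · have hPb : ∀ j ∈ P.erase (m + 5), j + 3 ≤ t := by
              intro j hj
              have := le_abs.mp (hrep'.2.2.2.2.2.1 j hj t htM')
              have := hle j (Finset.mem_union_left _ hj)
              omega
            obtain ⟨hb1, -⟩ := rep_bounds hrep'.swap htM'
              (fun i hi => hle i (Finset.mem_union_right _ hi)) hPb
            have htle : t ≤ m + 1 := by
              by_contra hc
              have : S (m + 1) ≤ S (t - 1) := S_mono (by omega)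
              omega
            constructor
            · intro i hi; have := hPb i hi; omega
            · intro j hj; have := hle j (Finset.mem_union_right _ hj); omega
      have hrep'' : IsFarDiff (x - F (m + 5) + F (m + 4))
          (insert (m + 4) (P.erase (m + 5))) M :=
        rep_insert hrep' (fun i hi => by have := hb.1 i hi; omega)
          (fun j hj => by have := hb.2 j hj; omega) (by omega)
      have hnotmem : m + 4 ∉ P.erase (m + 5) := fun hc => by have := hb.1 _ hc; omega
      have hcard : (insert (m + 4) (P.erase (m + 5))).card = k := by
        rw [Finset.card_insert_of_notMem hnotmem, hcP']
        omega
      have hbnd := rep_bounds hrep'' (Finset.mem_insert_self _ _)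
        (by
          intro i hi
          rcases Finset.mem_insert.mp hi with rfl | hi'
          · omega
          · have := hb.1 i hi'; omega)
        (fun j hj => by have := hb.2 j hj; omega)
      exact Or.inl (Or.inl ⟨x - F (m + 5) + F (m + 4),
        ⟨hbnd.1, hbnd.2, _, _, hrep'', hcard, hcM⟩,
        by show x - (F (m + 5) : ℤ) + F (m + 4) + F (m + 3) = x; omega⟩)
  · rintro x ((⟨y, ⟨hy1, hy2, P, M, hrep, hcP, hcM⟩, rfl⟩ |
        ⟨y, ⟨hy1, hy2, P, M, hrep, hcP, hcM⟩, rfl⟩) |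
        ⟨y, ⟨hy1, hy2, P, M, hrep, hcP, hcM⟩, rfl⟩)
    · -- from T (m+4) k ℓ
      obtain ⟨htop, hPle, hMle⟩ := rep_classify hrep (by omega) hy1 hy2
      have r1 : IsFarDiff (y - F (m + 4)) (P.erase (m + 4)) M := rep_erase hrep htop
      have hb' : ∀ i ∈ P.erase (m + 4), i ≤ m := by
        intro i hi
        have hiP := Finset.mem_of_mem_erase hi
        have := le_abs.mp (hrep.2.2.2.1 i hiP (m + 4) htop (Finset.ne_of_mem_erase hi))
        have := hPle i hiP
        omega
      have r2 : IsFarDiff (y - F (m + 4) + F (m + 5))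
          (insert (m + 5) (P.erase (m + 4))) M :=
        rep_insert r1 (fun i hi => by have := hb' i hi; omega)
          (fun j hj => by have := hMle j hj; omega) (by omega)
      have e : y - (F (m + 4) : ℤ) + F (m + 5) = y + F (m + 3) := by omega
      rw [e] at r2
      have hnotmem : m + 5 ∉ P.erase (m + 4) := fun hc => by have := hb' _ hc; omega
      have hcard : (insert (m + 5) (P.erase (m + 4))).card = k := by
        rw [Finset.card_insert_of_notMem hnotmem, Finset.card_erase_of_mem htop, hcP]
        omega
      have hbnd := rep_bounds r2 (Finset.mem_insert_self _ _)
        (by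
          intro i hi
          rcases Finset.mem_insert.mp hi with rfl | hi'
          · omega
          · have := hb' i hi'; omega)
        (fun j hj => by have := hMle j hj; omega)
      exact ⟨hbnd.1, hbnd.2, _, _, r2, hcard, hcM⟩
    · -- from T (m+1) (k-1) ℓ
      obtain ⟨htop, hPle, hMle⟩ := rep_classify hrep (by omega) hy1 hy2
      have r : IsFarDiff (y + F (m + 5)) (insert (m + 5) P) M :=
        rep_insert hrep (fun i hi => by have := hPle i hi; omega)
          (fun j hj => by have := hMle j hj; omega) (by omega)
      have hnotmem : m + 5 ∉ P := fun hc => by have := hPle _ hc; omega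
      have hcard : (insert (m + 5) P).card = k := by
        rw [Finset.card_insert_of_notMem hnotmem, hcP]
        omega
      have hbnd := rep_bounds r (Finset.mem_insert_self _ _)
        (by
          intro i hi
          rcases Finset.mem_insert.mp hi with rfl | hi'
          · omega
          · have := hPle i hi'; omega)
        (fun j hj => by have := hMle j hj; omega)
      exact ⟨hbnd.1, hbnd.2, _, _, r, hcard, hcM⟩
    · -- from T (m+2) ℓ (k-1)
      obtain ⟨htop, hPle, hMle⟩ := rep_classify hrep (by omega) hy1 hy2
      have r : IsFarDiff (-y + F (m + 5)) (insert (m + 5) M) P :=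
        rep_insert hrep.swap (fun j hj => by have := hMle j hj; omega)
          (fun i hi => by have := hPle i hi; omega) (by omega)
      have e : -y + (F (m + 5) : ℤ) = F (m + 5) - y := by omega
      rw [e] at r
      have hnotmem : m + 5 ∉ M := fun hc => by have := hMle _ hc; omega
      have hcard : (insert (m + 5) M).card = k := by
        rw [Finset.card_insert_of_notMem hnotmem, hcM]
        omega
      have hbnd := rep_bounds r (Finset.mem_insert_self _ _)
        (by
          intro i hi
          rcases Finset.mem_insert.mp hi with rfl | hi'
          · omega
          · have := hMle i hi'; omega)
        (fun j hj => by have := hPle j hj; omega)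
      exact ⟨hbnd.1, hbnd.2, _, _, r, hcard, hcP⟩

/-- The recurrence `p_{n,k,ℓ} = p_{n-1,k,ℓ} + p_{n-4,k-1,ℓ} + p_{n-3,ℓ,k-1}`
for `n ≥ 5`, `k ≥ 1`, `ℓ ≥ 0`. -/
theorem far_difference_recurrence (n k ℓ : ℕ) (hn : 5 ≤ n) (hk : 1 ≤ k) :
    p n k ℓ = p (n - 1) k ℓ + p (n - 4) (k - 1) ℓ + p (n - 3) ℓ (k - 1) := by
  obtain ⟨m, rfl⟩ : ∃ m, n = m + 5 := ⟨n - 5, by omega⟩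
  show p (m + 5) k ℓ = p (m + 4) k ℓ + p (m + 1) (k - 1) ℓ + p (m + 2) ℓ (k - 1)
  have c34 : (F (m + 5) : ℤ) = F (m + 4) + F (m + 3) := by exact_mod_cast F_add_two (m + 3)
  have c4 : F (m + 4) = S (m + 3) + S (m + 1) + 1 := F_eq (m + 3)
  have cS4 : S (m + 4) = F (m + 4) + S m := S_rec (m + 4) (by omega)
  rw [p_eq_T, p_eq_T, p_eq_T, p_eq_T, main_eq m k ℓ hk]
  have hf1 : ((fun y => y + (F (m + 3) : ℤ)) '' T (m + 4) k ℓ).Finite :=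
    (T_finite _ _ _).image _
  have hf2 : ((fun y => y + (F (m + 5) : ℤ)) '' T (m + 1) (k - 1) ℓ).Finite :=
    (T_finite _ _ _).image _
  have hf3 : ((fun y => (F (m + 5) : ℤ) - y) '' T (m + 2) ℓ (k - 1)).Finite :=
    (T_finite _ _ _).image _
  have hd12 : Disjoint ((fun y => y + (F (m + 3) : ℤ)) '' T (m + 4) k ℓ)
      ((fun y => y + (F (m + 5) : ℤ)) '' T (m + 1) (k - 1) ℓ) := by
    rw [Set.disjoint_left]
    rintro x ⟨y1, ⟨ha1, ha2, -⟩, rfl⟩ ⟨y2, ⟨hb1, hb2, -⟩, he⟩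
    simp only at he
    have ha1' : (S (m + 3) : ℤ) < y1 := ha1
    have hb1' : (S m : ℤ) < y2 := hb1
    omega
  have hd13 : Disjoint ((fun y => y + (F (m + 3) : ℤ)) '' T (m + 4) k ℓ)
      ((fun y => (F (m + 5) : ℤ) - y) '' T (m + 2) ℓ (k - 1)) := by
    rw [Set.disjoint_left]
    rintro x ⟨y1, ⟨ha1, ha2, -⟩, rfl⟩ ⟨y3, ⟨hb1, hb2, -⟩, he⟩
    simp only at he
    have ha1' : (S (m + 3) : ℤ) < y1 := ha1
    have hb1' : (S (m + 1) : ℤ) < y3 := hb1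
    omega
  have hd23 : Disjoint ((fun y => y + (F (m + 5) : ℤ)) '' T (m + 1) (k - 1) ℓ)
      ((fun y => (F (m + 5) : ℤ) - y) '' T (m + 2) ℓ (k - 1)) := by
    rw [Set.disjoint_left]
    rintro x ⟨y2, ⟨ha1, ha2, -⟩, rfl⟩ ⟨y3, ⟨hb1, hb2, -⟩, he⟩
    simp only at he
    omega
  rw [Set.ncard_union_eq (Disjoint.union_left hd13 hd23) (hf1.union hf2) hf3,
    Set.ncard_union_eq hd12 hf1 hf2,
    Set.ncard_image_of_injective _ (add_left_injective _),
    Set.ncard_image_of_injective _ (add_left_injective _),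
    Set.ncard_image_of_injective _ sub_right_injective]
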